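/- Let F be an n×n real matrix with all entries nonnegative and let V be an n×n real matrix that is Metzler and Hurwitz. Then ρ(F V⁻¹) = inf { r ∈ ℝ : r > 0 and there exists a vector w ∈ ℝⁿ with all entries strictly positive such that (F + rV) w ≤ 0 entrywise }. -/

import Mathlib

open Matrix

/-- A square real matrix is *Metzler* if all its off-diagonal entries are nonnegative. -/
def IsMetzler {n : ℕ} (A : Matrix (Fin n) (Fin n) ℝ) : Prop :=
  ∀ i j, i ≠ j → 0 ≤ A i j

/-- A square real matrix is *Hurwitz* if every complex eigenvalue has negative real part. -/
def IsHurwitz {n : ℕ} (A : Matrix (Fin n) (Fin n) ℝ) : Prop :=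
  ∀ μ ∈ spectrum ℂ (A.map Complex.ofReal), μ.re < 0

/-- The spectral radius of a square real matrix: the maximum modulus of its complex
eigenvalues. -/
noncomputable def specRad {n : ℕ} (A : Matrix (Fin n) (Fin n) ℝ) : ℝ :=
  sSup {x : ℝ | ∃ μ ∈ spectrum ℂ (A.map Complex.ofReal), x = ‖μ‖}

/-!
Write `N = -V⁻¹`. For large `s` the matrix `K = 1 + s⁻¹ V` is nonnegative (`V` is Metzler) and its
eigenvalues `1 + μ / s` lie in the open unit disc (`Re μ < 0`), so the Neumann series of
`(1 - K)⁻¹ = -s V⁻¹` shows `N ≥ 0`. Since `F V⁻¹ = -F N` and `F N`, `N F` have the same nonzero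
eigenvalues, `ρ(F V⁻¹) = ρ(F N) = ρ(N F)`.

If `w > 0` and `(F + r V) w ≤ 0`, applying `N ≥ 0` gives `N F w ≤ r w`, hence `ρ(N F) ≤ r` by the
Collatz–Wielandt argument: for an eigenvector `v`, look at a coordinate maximising `|vᵢ| / wᵢ`.
Conversely, if `r > ρ(F N)`, the Neumann series of `W = (1 - F N / r)⁻¹` is nonnegative, so
`w = N W 𝟙` is positive and `(F + r V) w = -r (1 - F N / r) W 𝟙 = -r 𝟙`.
-/

open Filter Pointwise

theorem summable_norm_pow_of_spectralRadius_lt_one {A : Type*} [NormedRing A]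
    [NormedAlgebra ℂ A] [CompleteSpace A] {a : A} (ha : spectralRadius ℂ a < 1) :
    Summable fun k : ℕ => ‖a ^ k‖ := by
  obtain ⟨c, hac, hc1⟩ := ENNReal.lt_iff_exists_nnreal_btwn.mp ha
  refine .of_norm_bounded_eventually_nat (summable_geometric_of_lt_one c.2 (mod_cast hc1)) ?_
  have hgelfand := spectrum.pow_nnnorm_pow_one_div_tendsto_nhds_spectralRadius a
  filter_upwards [hgelfand.eventually_lt_const hac, eventually_gt_atTop 0] with k hk hk0
  rw [← ENNReal.coe_rpow_of_nonneg _ (by positivity), ENNReal.coe_lt_coe, one_div,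
    NNReal.rpow_inv_lt_iff (by positivity), NNReal.rpow_natCast] at hk
  simpa using (NNReal.coe_lt_coe.mpr hk).le

theorem spectrum.smul_eq_smul_of_ne_zero {𝕜 A : Type*} [Field 𝕜] [Ring A] [Algebra 𝕜 A]
    (a : A) {c : 𝕜} (hc : c ≠ 0) : spectrum 𝕜 (c • a) = c • spectrum 𝕜 a := by
  rw [← Units.val_mk0 hc, ← Units.smul_def, ← Units.smul_def, spectrum.unit_smul_eq_smul]

theorem spectrum.one_add_smul_eq {𝕜 A : Type*} [Field 𝕜] [Ring A] [Algebra 𝕜 A]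
    (a : A) {c : 𝕜} (hc : c ≠ 0) : spectrum 𝕜 (1 + c • a) = {1} + c • spectrum 𝕜 a := by
  rw [← map_one (algebraMap 𝕜 A), ← spectrum.singleton_add_eq, smul_eq_smul_of_ne_zero a hc]

theorem Complex.eventually_norm_one_add_inv_mul_lt_one {μ : ℂ} (hμ : μ.re < 0) :
    ∀ᶠ s : ℝ in atTop, ‖1 + (s : ℂ)⁻¹ * μ‖ < 1 := by
  filter_upwards [eventually_gt_atTop (‖μ‖ ^ 2 / (-2 * μ.re)), eventually_gt_atTop 0]
    with s hs hs0
  -- `‖s + μ‖² = s² + 2 s Re μ + ‖μ‖²`, which is `< s²` once `s > ‖μ‖² / (-2 Re μ)`.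
  have hsμ : ‖(s : ℂ) + μ‖ < s := by
    rw [div_lt_iff₀ (by linarith)] at hs
    have h1 : ‖(s : ℂ) + μ‖ ^ 2 = (s + μ.re) ^ 2 + μ.im ^ 2 := by
      rw [Complex.sq_norm, Complex.normSq_apply]
      simp only [Complex.add_re, Complex.add_im, Complex.ofReal_re, Complex.ofReal_im, zero_add]
      ring
    have h2 : ‖μ‖ ^ 2 = μ.re ^ 2 + μ.im ^ 2 := by
      rw [Complex.sq_norm, Complex.normSq_apply]; ring
    nlinarith [norm_nonneg ((s : ℂ) + μ)]
  rwa [show 1 + (s : ℂ)⁻¹ * μ = (s : ℂ)⁻¹ * (s + μ) by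
      rw [mul_add, inv_mul_cancel₀ (by exact_mod_cast hs0.ne')], norm_mul, norm_inv,
    Complex.norm_real, Real.norm_of_nonneg hs0.le, inv_mul_lt_one₀ hs0]

namespace Matrix

variable {ι : Type*}

theorem map_ofReal_one_add [DecidableEq ι] (A : Matrix ι ι ℝ) :
    (1 + A).map Complex.ofReal = 1 + A.map Complex.ofReal := by
  rw [Matrix.map_add, Matrix.map_one] <;> simp

variable [Fintype ι]

theorem mul_apply_nonneg {A B : Matrix ι ι ℝ} (hA : ∀ i j, 0 ≤ A i j) (hB : ∀ i j, 0 ≤ B i j)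
    (i j : ι) : 0 ≤ (A * B) i j :=
  Finset.sum_nonneg fun k _ => mul_nonneg (hA i k) (hB k j)

variable [DecidableEq ι]

theorem map_ofReal_mul (A B : Matrix ι ι ℝ) :
    (A * B).map Complex.ofReal = A.map Complex.ofReal * B.map Complex.ofReal :=
  map_mul (Algebra.ofId ℝ ℂ).mapMatrix A B

theorem map_ofReal_pow (A : Matrix ι ι ℝ) (k : ℕ) :
    (A ^ k).map Complex.ofReal = A.map Complex.ofReal ^ k :=
  map_pow (Algebra.ofId ℝ ℂ).mapMatrix A k

theorem map_ofReal_smul (c : ℝ) (A : Matrix ι ι ℝ) :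
    (c • A).map Complex.ofReal = (c : ℂ) • A.map Complex.ofReal :=
  (map_smul (Algebra.ofId ℝ ℂ).mapMatrix c A).trans (Complex.coe_smul c _)

theorem exists_mulVec_eq_smul_of_mem_spectrum {𝕜 : Type*} [Field 𝕜] {M : Matrix ι ι 𝕜} {μ : 𝕜}
    (hμ : μ ∈ spectrum 𝕜 M) : ∃ v ≠ 0, M *ᵥ v = μ • v := by
  rw [← AlgEquiv.spectrum_eq toLinAlgEquiv', ← Module.End.hasEigenvalue_iff_mem_spectrum] at hμ
  obtain ⟨v, hv⟩ := hμ.exists_hasEigenvector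
  exact ⟨v, hv.2, by simpa using hv.apply_eq_smul⟩

theorem mulVec_pos_of_nonneg_of_mul_eq_one {N M : Matrix ι ι ℝ} (hN : ∀ i j, 0 ≤ N i j)
    (hNM : N * M = 1) {x : ι → ℝ} (hx : ∀ i, 0 < x i) (i : ι) : 0 < (N *ᵥ x) i := by
  obtain ⟨j, hj⟩ : ∃ j, N i j ≠ 0 := by
    by_contra! h
    simpa [mul_apply, h] using congrFun (congrFun hNM i) i
  exact Finset.sum_pos' (fun j _ => mul_nonneg (hN i j) (hx j).le)
    ⟨j, Finset.mem_univ _, mul_pos ((hN i j).lt_of_ne' hj) (hx j)⟩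

theorem summable_pow_of_forall_norm_lt_one {M : Matrix ι ι ℂ}
    (hM : ∀ μ ∈ spectrum ℂ M, ‖μ‖ < 1) : Summable fun k : ℕ => M ^ k := by
  -- Any submultiplicative norm will do; the ℓ∞ operator norm induces the product topology.
  let _ := Matrix.linftyOpNormedRing (n := ι) (α := ℂ)
  let _ := Matrix.linftyOpNormedAlgebra (n := ι) (R := ℂ) (α := ℂ)
  have hρ : spectralRadius ℂ M < 1 := by
    rcases (spectrum ℂ M).eq_empty_or_nonempty with h | h
    · simp [spectralRadius, h]
    · exact_mod_cast spectrum.spectralRadius_lt_of_forall_lt_of_nonempty h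
        fun μ hμ => by exact_mod_cast hM μ hμ
  exact (summable_norm_pow_of_spectralRadius_lt_one hρ).of_norm

theorem exists_nonneg_right_inv_one_sub {K : Matrix ι ι ℝ} (hK : ∀ i j, 0 ≤ K i j)
    (hσ : ∀ μ ∈ spectrum ℂ (K.map Complex.ofReal), ‖μ‖ < 1) :
    ∃ W : Matrix ι ι ℝ, (1 - K) * W = 1 ∧ ∀ i j, 0 ≤ W i j := by
  have hc := summable_pow_of_forall_norm_lt_one hσ
  have hs : Summable fun k : ℕ => K ^ k := by
    refine Pi.summable.2 fun i => Pi.summable.2 fun j => Complex.summable_ofReal.1 ?_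
    exact (Pi.summable.1 (Pi.summable.1 hc i) j).congr fun k => by rw [← map_ofReal_pow]; rfl
  refine ⟨∑' k, K ^ k, hs.one_sub_mul_tsum_pow, fun i j => ?_⟩
  exact (Pi.hasSum.1 (Pi.hasSum.1 hs.hasSum i) j).nonneg fun k => pow_apply_nonneg hK k i j

theorem norm_le_of_mem_spectrum_of_mulVec_le {K : Matrix ι ι ℝ} {w : ι → ℝ} {r : ℝ}
    (hK : ∀ i j, 0 ≤ K i j) (hw : ∀ i, 0 < w i) (hKw : ∀ i, (K *ᵥ w) i ≤ r * w i)
    {μ : ℂ} (hμ : μ ∈ spectrum ℂ (K.map Complex.ofReal)) : ‖μ‖ ≤ r := by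
  obtain ⟨v, hv0, hv⟩ := exists_mulVec_eq_smul_of_mem_spectrum hμ
  obtain ⟨i₀, hi₀⟩ : ∃ i, v i ≠ 0 := Function.ne_iff.mp hv0
  have : Nonempty ι := ⟨i₀⟩
  obtain ⟨i, -, hi⟩ := Finset.univ.exists_max_image (fun j => ‖v j‖ / w j) Finset.univ_nonempty
  set t := ‖v i‖ / w i
  have hvt : ∀ j, ‖v j‖ ≤ t * w j := fun j =>
    (div_le_iff₀ (hw j)).mp (hi j (Finset.mem_univ j))
  have hvi : ‖v i‖ = t * w i := (div_mul_cancel₀ _ (hw i).ne').symm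
  have ht : 0 < t := (div_pos (norm_pos_iff.2 hi₀) (hw i₀)).trans_le (hi i₀ (Finset.mem_univ _))
  refine le_of_mul_le_mul_right ?_ (mul_pos ht (hw i))
  calc ‖μ‖ * (t * w i) = ‖∑ j, (K i j : ℂ) * v j‖ := by
        rw [← hvi, ← norm_mul, ← smul_eq_mul, ← Pi.smul_apply, ← hv]; rfl
    _ ≤ ∑ j, K i j * ‖v j‖ := by
        refine (norm_sum_le _ _).trans_eq (Finset.sum_congr rfl fun j _ => ?_)
        rw [norm_mul, Complex.norm_real, Real.norm_of_nonneg (hK i j)]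
    _ ≤ ∑ j, K i j * (t * w j) := by gcongr with j; exacts [hK i j, hvt j]
    _ = t * (K *ᵥ w) i := by
        rw [mulVec, dotProduct, Finset.mul_sum]; exact Finset.sum_congr rfl fun j _ => by ring
    _ ≤ t * (r * w i) := by gcongr; exact hKw i
    _ = r * (t * w i) := by ring

end Matrix

section SpecRad

variable {n : ℕ}

theorem specRad_eq_sSup_image (A : Matrix (Fin n) (Fin n) ℝ) :
    specRad A = sSup (norm '' spectrum ℂ (A.map Complex.ofReal)) := by
  simp only [specRad, Set.image, eq_comm]

theorem bddAbove_norm_image_spectrum (A : Matrix (Fin n) (Fin n) ℝ) :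
    BddAbove (norm '' spectrum ℂ (A.map Complex.ofReal)) :=
  ((finite_spectrum _).image _).bddAbove

theorem norm_le_specRad {A : Matrix (Fin n) (Fin n) ℝ} {μ : ℂ}
    (hμ : μ ∈ spectrum ℂ (A.map Complex.ofReal)) : ‖μ‖ ≤ specRad A := by
  rw [specRad_eq_sSup_image]
  exact le_csSup (bddAbove_norm_image_spectrum A) (Set.mem_image_of_mem _ hμ)

theorem specRad_le {A : Matrix (Fin n) (Fin n) ℝ} {r : ℝ} (hr : 0 ≤ r)
    (h : ∀ μ ∈ spectrum ℂ (A.map Complex.ofReal), ‖μ‖ ≤ r) : specRad A ≤ r := by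
  rw [specRad_eq_sSup_image]
  exact Real.sSup_le (by rintro _ ⟨μ, hμ, rfl⟩; exact h μ hμ) hr

theorem specRad_nonneg (A : Matrix (Fin n) (Fin n) ℝ) : 0 ≤ specRad A := by
  rw [specRad_eq_sSup_image]
  exact Real.sSup_nonneg (by rintro _ ⟨μ, -, rfl⟩; exact norm_nonneg μ)

theorem specRad_neg (A : Matrix (Fin n) (Fin n) ℝ) : specRad (-A) = specRad A := by
  rw [specRad_eq_sSup_image, specRad_eq_sSup_image, Matrix.map_neg _ Complex.ofReal_neg,
    ← spectrum.neg_eq, ← Set.image_neg_eq_neg, Set.image_image]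
  simp only [norm_neg]

theorem specRad_eq_sSup_image_insert_zero (A : Matrix (Fin n) (Fin n) ℝ) :
    specRad A = sSup (norm '' insert 0 (spectrum ℂ (A.map Complex.ofReal))) := by
  rw [Set.image_insert_eq, norm_zero]
  rcases (norm '' spectrum ℂ (A.map Complex.ofReal)).eq_empty_or_nonempty with h | h
  · simp [specRad_eq_sSup_image, h]
  · rw [csSup_insert (bddAbove_norm_image_spectrum A) h, ← specRad_eq_sSup_image,
      max_eq_right (specRad_nonneg A)]

theorem specRad_mul_comm (A B : Matrix (Fin n) (Fin n) ℝ) :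
    specRad (A * B) = specRad (B * A) := by
  rw [specRad_eq_sSup_image_insert_zero, specRad_eq_sSup_image_insert_zero,
    Matrix.map_ofReal_mul, Matrix.map_ofReal_mul, ← Set.insert_sdiff_singleton,
    spectrum.nonzero_mul_comm, Set.insert_sdiff_singleton]

theorem norm_lt_one_of_mem_spectrum_inv_smul {A : Matrix (Fin n) (Fin n) ℝ} {r : ℝ}
    (hr : specRad A < r) {μ : ℂ} (hμ : μ ∈ spectrum ℂ ((r⁻¹ • A).map Complex.ofReal)) :
    ‖μ‖ < 1 := by
  have hr0 : 0 < r := (specRad_nonneg A).trans_lt hr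
  rw [Matrix.map_ofReal_smul, spectrum.smul_eq_smul_of_ne_zero _ (by simpa using hr0.ne')] at hμ
  obtain ⟨ν, hν, rfl⟩ := hμ
  change ‖((r⁻¹ : ℝ) : ℂ) * ν‖ < 1
  rw [norm_mul, Complex.norm_real, Real.norm_of_nonneg (inv_nonneg.2 hr0.le), inv_mul_lt_one₀ hr0]
  exact (norm_le_specRad hν).trans_lt hr

end SpecRad

section MetzlerHurwitz

variable {n : ℕ} {V : Matrix (Fin n) (Fin n) ℝ}

theorem IsHurwitz.isUnit_det (hV : IsHurwitz V) : IsUnit V.det := by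
  refine isUnit_iff_ne_zero.2 fun h0 => (hV 0 ?_).false
  rw [spectrum.zero_mem_iff, isUnit_iff_isUnit_det,
    ← show ((V.det : ℝ) : ℂ) = (V.map Complex.ofReal).det from RingHom.map_det Complex.ofRealHom V,
    h0]
  simp

theorem IsHurwitz.eventually_norm_lt_one_of_mem_spectrum_one_add_inv_smul (hV : IsHurwitz V) :
    ∀ᶠ s : ℝ in atTop, ∀ μ ∈ spectrum ℂ ((1 + s⁻¹ • V).map Complex.ofReal), ‖μ‖ < 1 := by
  filter_upwards [(finite_spectrum _).eventually_all.2 fun μ hμ =>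
    Complex.eventually_norm_one_add_inv_mul_lt_one (hV μ hμ), eventually_ne_atTop 0]
    with s hs hs0 μ hμ
  rw [Matrix.map_ofReal_one_add, Matrix.map_ofReal_smul,
    spectrum.one_add_smul_eq _ (by exact_mod_cast inv_ne_zero hs0)] at hμ
  obtain ⟨_, rfl, _, ⟨ν, hν, rfl⟩, rfl⟩ := hμ
  simpa using hs ν hν

theorem IsMetzler.eventually_one_add_inv_smul_nonneg (hV : IsMetzler V) :
    ∀ᶠ s : ℝ in atTop, ∀ i j, 0 ≤ (1 + s⁻¹ • V) i j := by
  filter_upwards [eventually_all.2 fun i => eventually_ge_atTop (-V i i), eventually_gt_atTop 0]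
    with s hs hs0 i j
  rcases eq_or_ne i j with rfl | hij
  · simp only [Matrix.add_apply, one_apply_eq, Matrix.smul_apply, smul_eq_mul, ← div_eq_inv_mul,
      ← neg_le_iff_add_nonneg', le_div_iff₀ hs0]
    linarith [hs i]
  · simpa [one_apply_ne hij] using mul_nonneg (inv_nonneg.2 hs0.le) (hV i j hij)

theorem IsMetzler.neg_inv_nonneg (hM : IsMetzler V) (hH : IsHurwitz V) :
    ∀ i j, 0 ≤ (-V⁻¹) i j := by
  obtain ⟨s, hs0, hK, hσ⟩ := ((eventually_gt_atTop 0).and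
    (hM.eventually_one_add_inv_smul_nonneg.and
      hH.eventually_norm_lt_one_of_mem_spectrum_one_add_inv_smul)).exists
  obtain ⟨W, hW, hW0⟩ := Matrix.exists_nonneg_right_inv_one_sub hK hσ
  have hVW : V⁻¹ = -s⁻¹ • W := inv_eq_right_inv <| by
    simpa [Matrix.mul_smul, Matrix.smul_mul] using hW
  intro i j
  simpa [hVW] using mul_nonneg (inv_nonneg.2 hs0.le) (hW0 i j)

end MetzlerHurwitz

section

variable {n : ℕ} {F V N : Matrix (Fin n) (Fin n) ℝ} {r : ℝ}

theorem specRad_le_of_mulVec_nonpos (hF : ∀ i j, 0 ≤ F i j) (hN : ∀ i j, 0 ≤ N i j)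
    (hNV : N * V = -1) (hr : 0 ≤ r) {w : Fin n → ℝ} (hw : ∀ i, 0 < w i)
    (hFVw : ∀ i, ((F + r • V) *ᵥ w) i ≤ 0) : specRad (F * N) ≤ r := by
  have hNFw : ∀ i, ((N * F) *ᵥ w) i ≤ r * w i := by
    intro i
    have hsplit : (N * F) *ᵥ w = N *ᵥ ((F + r • V) *ᵥ w) + r • w := by
      rw [mulVec_mulVec, Matrix.mul_add, Matrix.mul_smul, hNV, add_mulVec, Matrix.smul_mulVec,
        neg_mulVec, one_mulVec, smul_neg, neg_add_cancel_right]
    have hneg : (N *ᵥ ((F + r • V) *ᵥ w)) i ≤ 0 := by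
      simp only [mulVec, dotProduct]
      exact Finset.sum_nonpos fun j _ => mul_nonpos_of_nonneg_of_nonpos (hN i j) (hFVw j)
    simpa [hsplit] using hneg
  rw [specRad_mul_comm]
  exact specRad_le hr fun μ hμ =>
    Matrix.norm_le_of_mem_spectrum_of_mulVec_le (Matrix.mul_apply_nonneg hN hF) hw hNFw hμ

theorem exists_pos_vec_of_specRad_lt (hF : ∀ i j, 0 ≤ F i j) (hN : ∀ i j, 0 ≤ N i j)
    (hVN : V * N = -1) (hNV : N * V = -1) (hr : specRad (F * N) < r) :
    0 < r ∧ ∃ w : Fin n → ℝ, (∀ i, 0 < w i) ∧ ∀ i, ((F + r • V) *ᵥ w) i ≤ 0 := by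
  have hr0 : 0 < r := (specRad_nonneg _).trans_lt hr
  set A := r⁻¹ • (F * N) with hA_def
  have hA : ∀ i j, 0 ≤ A i j := fun i j =>
    mul_nonneg (inv_nonneg.2 hr0.le) (Matrix.mul_apply_nonneg hF hN i j)
  obtain ⟨W, hW, hW0⟩ := Matrix.exists_nonneg_right_inv_one_sub hA fun _ =>
    norm_lt_one_of_mem_spectrum_inv_smul hr
  have hx := Matrix.mulVec_pos_of_nonneg_of_mul_eq_one hW0 (mul_eq_one_comm.1 hW)
    (x := fun _ => 1) fun _ => one_pos
  have hFVN : (F + r • V) * N = -r • (1 - A) := by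
    rw [Matrix.add_mul, Matrix.smul_mul, hVN, hA_def, smul_sub, smul_smul, neg_mul,
      mul_inv_cancel₀ hr0.ne']
    module
  have hNV' : N * -V = 1 := by rw [Matrix.mul_neg, hNV, neg_neg]
  refine ⟨hr0, N *ᵥ W *ᵥ fun _ => 1, Matrix.mulVec_pos_of_nonneg_of_mul_eq_one hN hNV' hx,
    fun i => ?_⟩
  have hval : (F + r • V) *ᵥ N *ᵥ W *ᵥ (fun _ => 1) = -r • fun _ => 1 := by
    rw [mulVec_mulVec, mulVec_mulVec, hFVN, Matrix.smul_mul, hW,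
      Matrix.smul_mulVec, one_mulVec]
  rw [hval]
  simpa using hr0.le

end

/-- `ρ(F V⁻¹) = inf { r > 0 : ∃ w > 0 with (F + rV) w ≤ 0 entrywise }`. -/
theorem specRad_eq_sInf_exists_pos_vec_le {n : ℕ} (F V : Matrix (Fin n) (Fin n) ℝ)
    (hF : ∀ i j, 0 ≤ F i j) (hVmetzler : IsMetzler V) (hVhurwitz : IsHurwitz V) :
    specRad (F * V⁻¹) =
      sInf {r : ℝ | 0 < r ∧ ∃ w : Fin n → ℝ, (∀ i, 0 < w i) ∧
        ∀ i, ((F + r • V) *ᵥ w) i ≤ 0} := by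
  have hV := hVhurwitz.isUnit_det
  have hN := hVmetzler.neg_inv_nonneg hVhurwitz
  have hVN : V * -V⁻¹ = -1 := by rw [Matrix.mul_neg, mul_nonsing_inv V hV]
  have hNV : -V⁻¹ * V = -1 := by rw [Matrix.neg_mul, nonsing_inv_mul V hV]
  have hmem := fun r (hr : specRad (F * -V⁻¹) < r) =>
    exists_pos_vec_of_specRad_lt hF hN hVN hNV hr
  rw [← neg_neg V⁻¹, Matrix.mul_neg, specRad_neg]
  refine le_antisymm ?_ (le_of_forall_gt_imp_ge_of_dense fun r hr =>
    csInf_le ⟨0, fun _ h => h.1.le⟩ (hmem r hr))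
  exact le_csInf ⟨_, hmem _ (lt_add_one _)⟩ fun r ⟨hr, _, hw, hFVw⟩ =>
    specRad_le_of_mulVec_nonpos hF hN hNV hr.le hw hFVw
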